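/- If X is an almost surely bounded nonnegative integer-valued random variable, then ρ(X) = 0 if and only if X = 0 almost surely. -/

import Mathlib

open scoped BigOperators

/-- `IsPMF p` : `p` is a probability mass function on `ℕ`. -/
def IsPMF (p : ℕ → ℝ) : Prop :=
  (∀ n, 0 ≤ p n) ∧ HasSum p 1

/-- Binomial `α`-thinning at the level of distributions:
`thin α p k = P(α ∘ X = k)` when `X` has pmf `p`. -/
noncomputable def thin (α : ℝ) (p : ℕ → ℝ) (k : ℕ) : ℝ :=
  ∑' n : ℕ, (n.choose k : ℝ) * α ^ k * (1 - α) ^ (n - k) * p n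

/-- Convolution of two pmfs on `ℕ` (law of the sum of independent variables). -/
noncomputable def conv (p q : ℕ → ℝ) (n : ℕ) : ℝ :=
  ∑ k ∈ Finset.range (n + 1), p k * q (n - k)

/-- `MemM α p` : the distribution `p` is an `α`-thinned distribution, i.e. `p ∈ M_α`. -/
def MemM (α : ℝ) (p : ℕ → ℝ) : Prop :=
  ∃ q : ℕ → ℝ, IsPMF q ∧ ∀ k, p k = thin α q k

/-- `rho p` : the minimal thinning parameter `ρ(X)`. -/
noncomputable def rho (p : ℕ → ℝ) : ℝ :=
  sInf {α : ℝ | α ∈ Set.Icc (0:ℝ) 1 ∧ MemM α p}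

/-!
If `p` is the `α`-thinning of `q` and `p` vanishes beyond `N`, then so does `q` as soon as
`α > 0`, since `p n ≥ α ^ n q n`. Hence `p 0 = ∑ (1 - α) ^ n q n ≥ (1 - α) ^ N ≥ 1 - N α`, i.e.
every admissible `α` is at least `(1 - p 0) / N`, which forces `p 0 = 1` when `ρ = 0`.
Conversely the `0`-thinning of any law is the point mass at `0`.
-/

open Set

lemma IsPMF.eq_zero_of_apply_zero_eq_one {p : ℕ → ℝ} (hp : IsPMF p) (h0 : p 0 = 1) {k : ℕ}
    (hk : k ≠ 0) : p k = 0 := by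
  have hpair : p 0 + p k ≤ 1 := by
    simpa [Finset.sum_pair hk.symm] using sum_le_hasSum {0, k} (fun n _ => hp.1 n) hp.2
  linarith [hp.1 k]

lemma choose_mul_pow_mul_pow_le_one {α : ℝ} (h0 : 0 ≤ α) (h1 : α ≤ 1) (n k : ℕ) :
    (n.choose k : ℝ) * α ^ k * (1 - α) ^ (n - k) ≤ 1 := by
  rcases lt_or_ge n k with hnk | hkn
  · simp [Nat.choose_eq_zero_of_lt hnk]
  have h1' : 0 ≤ 1 - α := by linarith
  have hterm : ∀ j ∈ Finset.range (n + 1), 0 ≤ α ^ j * (1 - α) ^ (n - j) * (n.choose j : ℝ) :=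
    fun j _ => by positivity
  calc (n.choose k : ℝ) * α ^ k * (1 - α) ^ (n - k)
      = α ^ k * (1 - α) ^ (n - k) * (n.choose k : ℝ) := by ring
    _ ≤ ∑ j ∈ Finset.range (n + 1), α ^ j * (1 - α) ^ (n - j) * (n.choose j : ℝ) :=
        Finset.single_le_sum hterm (Finset.mem_range.mpr (Nat.lt_succ_of_le hkn))
    _ = 1 := by rw [← add_pow]; simp

section thin

variable {α : ℝ} {q : ℕ → ℝ}

lemma thin_summand_nonneg (h0 : 0 ≤ α) (h1 : α ≤ 1) (hq : ∀ n, 0 ≤ q n) (k n : ℕ) :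
    0 ≤ (n.choose k : ℝ) * α ^ k * (1 - α) ^ (n - k) * q n := by
  have : 0 ≤ 1 - α := by linarith
  have := hq n
  positivity

lemma summable_thin_summand (h0 : 0 ≤ α) (h1 : α ≤ 1) (hq : ∀ n, 0 ≤ q n) (hs : Summable q)
    (k : ℕ) : Summable fun n => (n.choose k : ℝ) * α ^ k * (1 - α) ^ (n - k) * q n :=
  hs.of_nonneg_of_le (thin_summand_nonneg h0 h1 hq k) fun n =>
    mul_le_of_le_one_left (hq n) (choose_mul_pow_mul_pow_le_one h0 h1 n k)

lemma pow_mul_le_thin (h0 : 0 ≤ α) (h1 : α ≤ 1) (hq : ∀ n, 0 ≤ q n) (hs : Summable q)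
    (k : ℕ) : α ^ k * q k ≤ thin α q k := by
  simpa [thin] using (summable_thin_summand h0 h1 hq hs k).le_tsum k
    fun n _ => thin_summand_nonneg h0 h1 hq k n

lemma thin_apply_zero (q : ℕ → ℝ) : thin α q 0 = ∑' n, (1 - α) ^ n * q n := by
  simp [thin]

lemma thin_one (q : ℕ → ℝ) : thin 1 q = q := by
  funext k
  rw [thin, tsum_eq_single k]
  · simp
  intro n hn
  rcases lt_or_gt_of_ne hn with hnk | hkn
  · simp [Nat.choose_eq_zero_of_lt hnk]
  · simp [zero_pow (Nat.sub_ne_zero_of_lt hkn)]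

lemma thin_zero (hq : HasSum q 1) : thin 0 q = Pi.single 0 1 := by
  funext k
  rcases eq_or_ne k 0 with rfl | hk
  · simpa [thin_apply_zero] using hq.tsum_eq
  · simp [thin, zero_pow hk, hk]

lemma one_sub_mul_le_thin_apply_zero (h0 : 0 ≤ α) (h1 : α ≤ 1) (hq : IsPMF q) {N : ℕ}
    (hN : ∀ n, N < n → q n = 0) : 1 - N * α ≤ thin α q 0 := by
  have hs : Summable fun n => (1 - α) ^ n * q n := by
    simpa using summable_thin_summand h0 h1 hq.1 hq.2.summable 0
  calc 1 - N * α ≤ (1 - α) ^ N := by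
        simpa [sub_eq_add_neg] using one_add_mul_sub_le_pow (a := 1 - α) (by linarith) N
    _ = ∑' n, (1 - α) ^ N * q n := by rw [tsum_mul_left, hq.2.tsum_eq, mul_one]
    _ ≤ ∑' n, (1 - α) ^ n * q n := by
        refine (hq.2.summable.mul_left _).tsum_le_tsum (fun n => ?_) hs
        rcases le_or_gt n N with hn | hn
        · exact mul_le_mul_of_nonneg_right (pow_le_pow_of_le_one (by linarith) (by linarith) hn)
            (hq.1 n)
        · simp [hN n hn]
    _ = thin α q 0 := (thin_apply_zero q).symm

end thin

section MemM

variable {α : ℝ} {p : ℕ → ℝ}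

lemma memM_one (hp : IsPMF p) : MemM 1 p :=
  ⟨p, hp, fun k => by rw [thin_one]⟩

lemma memM_zero (hp : IsPMF p) (h0 : p 0 = 1) : MemM 0 p := by
  refine ⟨p, hp, fun k => ?_⟩
  rw [thin_zero hp.2]
  rcases eq_or_ne k 0 with rfl | hk
  · simpa using h0
  · simp [hp.eq_zero_of_apply_zero_eq_one h0 hk, hk]

lemma one_sub_mul_le_of_memM (h0 : 0 ≤ α) (h1 : α ≤ 1) (hM : MemM α p) {N : ℕ}
    (hN : ∀ k, N < k → p k = 0) : 1 - N * α ≤ p 0 := by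
  obtain ⟨q, hq, hpq⟩ := hM
  rw [hpq 0]
  rcases h0.eq_or_lt with rfl | hα
  · simp [thin_zero hq.2]
  refine one_sub_mul_le_thin_apply_zero h0 h1 hq fun n hn => ?_
  have hle : α ^ n * q n ≤ 0 :=
    (pow_mul_le_thin h0 h1 hq.1 hq.2.summable n).trans_eq (by rw [← hpq n, hN n hn])
  exact le_antisymm (nonpos_of_mul_nonpos_right hle (pow_pos hα n)) (hq.1 n)

lemma rho_le (h0 : 0 ≤ α) (h1 : α ≤ 1) (hM : MemM α p) : rho p ≤ α :=
  csInf_le ⟨0, fun _ hβ => hβ.1.1⟩ ⟨⟨h0, h1⟩, hM⟩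

lemma le_rho (hp : IsPMF p) {c : ℝ} (h : ∀ α ∈ Icc (0 : ℝ) 1, MemM α p → c ≤ α) : c ≤ rho p :=
  le_csInf ⟨1, ⟨zero_le_one, le_rfl⟩, memM_one hp⟩ fun α hα => h α hα.1 hα.2

lemma rho_nonneg (p : ℕ → ℝ) : 0 ≤ rho p :=
  Real.sInf_nonneg fun _ hα => hα.1.1

end MemM

/-- for a.s. bounded `X`, `ρ(X) = 0` iff `X = 0` a.s. -/
theorem stmt_9 (p : ℕ → ℝ) (hp : IsPMF p) (hb : ∃ N : ℕ, ∀ k, N < k → p k = 0) :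
    rho p = 0 ↔ p 0 = 1 := by
  refine ⟨fun hρ => ?_, fun h0 => le_antisymm (rho_le le_rfl zero_le_one (memM_zero hp h0))
    (rho_nonneg p)⟩
  obtain ⟨N, hN⟩ := hb
  have hN1 : ∀ k, N + 1 < k → p k = 0 := fun k hk => hN k (by omega)
  have hpos : (0 : ℝ) < N + 1 := by positivity
  have hbound : (1 - p 0) / (N + 1) ≤ rho p := le_rho hp fun α ⟨h0, h1⟩ hM => by
    rw [div_le_iff₀ hpos]
    have := one_sub_mul_le_of_memM h0 h1 hM hN1
    push_cast at this
    linarith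
  rw [hρ, div_le_iff₀ hpos, zero_mul] at hbound
  linarith [le_hasSum hp.2 0 fun n _ => hp.1 n]
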